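/- Let $F = \mathbb{Q}(t)$ be the field of rational functions in $t$ over $\mathbb{Q}$. In the power series ring $F\llbracket y \rrbracket$, the following identity holds: $\prod_{n \ge 1} \frac{(1 + y^n t^{2n-1})^2}{(1 - y^n t^{2n-2})(1 - y^n t^{2n})} \;=\; \sum_{n \ge 0} \Big( \sum_{\lambda \in \mathcal{P}_n} \Big(\frac{t+1}{t-1}\Big)^{\ell(\lambda)}\, t^{\,2n - 2|\lambda|} \prod_{j \,:\, \lambda_j \ge 1} \big(t^{2\lambda_j} - 1\big) \Big)\, y^n$, where the infinite product converges in the $y$-adic topology, $\mathcal{P}_n$ is the set of partitions of $n$, a partition is written $\lambda = [1^{\lambda_1} 2^{\lambda_2} \cdots n^{\lambda_n}]$ with $\lambda_j \ge 0$ the number of parts of size $j$ (so $n = \sum_j j\lambda_j$), $|\lambda| = \sum_j \lambda_j$ is the total number of parts, and $\ell(\lambda) = \#\{j : \lambda_j \ge 1\}$ is the number of distinct part sizes. Equivalently, the $y^n$-coefficient equals $t^{2n} \sum_{\lambda \in \mathcal{P}_n} \prod_{j=1}^{n} a_{\lambda_j}(t)$ where $a_0(t) = 1$ and $a_k(t)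 = \frac{t+1}{t-1}(1 - t^{-2k})$ for $k \ge 1$. -/

import Mathlib

/-!
With `α = (t + 1) / (t - 1)` and `u = yⁿ`, the `n`-th factor splits into partial fractions,
`(1 + t^{2n-1} u)² / ((1 - t^{2n-2} u)(1 - t^{2n} u))
  = 1 + α / (1 - t^{2n} u) - α / (1 - t^{2n-2} u)`,
because `α (t^{2n} - t^{2n-2}) = (t^{n-1} + t^n)²`. Hence its coefficient of `u^k`, `k ≥ 1`, is
`α t^{2(n-1)k} (t^{2k} - 1)`, and the product is the partition generating function
(`Nat.Partition.hasProd_genFun`) whose weight for a part `j` of multiplicity `k` is this number.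
Over a partition of `n` the powers `t^{2(j-1)k}` multiply to `t^{2n - 2|λ|}`.
-/

/-- The coefficient field `F = ℚ(t)` carries the discrete topology. -/
noncomputable instance : TopologicalSpace (RatFunc ℚ) := ⊥

instance : DiscreteTopology (RatFunc ℚ) := ⟨rfl⟩

/-- The product topology on `F⟦y⟧` (coefficientwise convergence), under which the
infinite product below converges. -/
noncomputable instance : TopologicalSpace (PowerSeries (RatFunc ℚ)) :=
  inferInstanceAs (TopologicalSpace ((Unit →₀ ℕ) → RatFunc ℚ))

open PowerSeries

/-- Under `hc` and `hα`, `(1 + c u) ^ 2 = (1 - a u) (1 - b u) + α ((1 - a u) - (1 - b u))`. -/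
theorem one_add_mul_sq_mul_mul_eq {R : Type*} [CommRing R] {a b c α u A B : R}
    (hA : (1 - a * u) * A = 1) (hB : (1 - b * u) * B = 1) (hc : c ^ 2 = a * b)
    (hα : α * (b - a) = 2 * c + a + b) :
    (1 + c * u) ^ 2 * A * B = 1 + α * (B - A) := by
  linear_combination (u ^ 2 * A * B) * hc - (u * A * B) * hα + ((1 - b * u) * B + α * B) * hA
    + (1 - α * A) * hB

section GeometricSeries

open scoped PowerSeries.WithPiTopology

variable {K : Type*} [Field K] [TopologicalSpace K] [IsTopologicalRing K] [T2Space K]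

theorem PowerSeries.tsum_C_mul_X_pow_pow (x : K) {s : ℕ} (hs : s ≠ 0) :
    ∑' k, (C x * X ^ s : K⟦X⟧) ^ k = (1 - C x * X ^ s)⁻¹ := by
  rw [eq_inv_iff_mul_eq_one (by simp [hs]), mul_comm]
  exact WithPiTopology.one_sub_mul_tsum_pow_of_constantCoeff_eq_zero (by simp [hs])

theorem PowerSeries.tsum_smul_X_pow_eq_C_mul_inv_sub_inv (α a b : K) {s : ℕ} (hs : s ≠ 0) :
    ∑' j, (α * (b ^ (j + 1) - a ^ (j + 1))) • (X : K⟦X⟧) ^ (s * (j + 1)) =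
      C α * ((1 - C b * X ^ s)⁻¹ - (1 - C a * X ^ s)⁻¹) := by
  have summable (x : K) : Summable ((C x * X ^ s : K⟦X⟧) ^ ·) :=
    WithPiTopology.summable_pow_of_constantCoeff_eq_zero (by simp [hs])
  have hdiff := (summable b).sub (summable a)
  rw [← tsum_C_mul_X_pow_pow a hs, ← tsum_C_mul_X_pow_pow b hs,
    ← (summable b).tsum_sub (summable a), hdiff.tsum_eq_zero_add]
  simp only [pow_zero, sub_self, zero_add]
  rw [← ((summable_nat_add_iff 1).mpr hdiff).tsum_mul_left]
  refine tsum_congr fun j => ?_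
  simp only [smul_eq_C_mul, mul_pow, ← pow_mul, ← map_pow, map_mul, map_sub]
  ring

theorem PowerSeries.one_add_C_mul_X_pow_sq_mul_inv_mul_inv {α a b c : K} (hc : c ^ 2 = a * b)
    (hα : α * (b - a) = 2 * c + a + b) {s : ℕ} (hs : s ≠ 0) :
    (1 + C c * X ^ s) ^ 2 * (1 - C a * X ^ s)⁻¹ * (1 - C b * X ^ s)⁻¹ =
      1 + ∑' j, (α * (b ^ (j + 1) - a ^ (j + 1))) • (X : K⟦X⟧) ^ (s * (j + 1)) := by
  rw [tsum_smul_X_pow_eq_C_mul_inv_sub_inv α a b hs]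
  refine one_add_mul_sq_mul_mul_eq (PowerSeries.mul_inv_cancel _ (by simp [hs]))
    (PowerSeries.mul_inv_cancel _ (by simp [hs])) (by rw [← map_pow, hc, map_mul]) ?_
  rw [← map_sub, ← map_mul, hα, map_add, map_add, map_mul, map_ofNat]

end GeometricSeries

theorem RatFunc.X_ne_one {K : Type*} [Field K] : (X : RatFunc K) ≠ 1 := by
  rw [← algebraMap_X, ← map_one (algebraMap (Polynomial K) (RatFunc K)),
    (algebraMap_injective K).ne_iff]
  exact fun h => by simpa using congrArg Polynomial.natDegree h

theorem Nat.Partition.sum_map_sub_one {n : ℕ} (p : n.Partition) :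
    (p.parts.map (· - 1)).sum = n - Multiset.card p.parts := by
  have h : (p.parts.map fun j => j - 1 + 1) = p.parts := by
    conv_rhs => rw [← Multiset.map_id p.parts]
    exact Multiset.map_congr rfl fun j hj => Nat.sub_add_cancel (p.parts_pos hj)
  have := congrArg Multiset.sum h
  rw [Multiset.sum_map_add, p.parts_sum, Multiset.map_const', Multiset.sum_replicate,
    smul_eq_mul, mul_one] at this
  omega

section Weight

variable {K : Type*} [Field K]

noncomputable def hilbertSchemeWeight (t : K) (j k : ℕ) : K :=
  (t + 1) / (t - 1) * ((t ^ (2 * j)) ^ k - (t ^ (2 * (j - 1))) ^ k)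

theorem hilbertSchemeWeight_of_pos (t : K) {j : ℕ} (hj : 0 < j) (k : ℕ) :
    hilbertSchemeWeight t j k =
      (t + 1) / (t - 1) * t ^ (2 * (j - 1) * k) * (t ^ (2 * k) - 1) := by
  obtain ⟨i, rfl⟩ := Nat.exists_eq_add_of_lt hj
  simp only [hilbertSchemeWeight, zero_add, Nat.add_sub_cancel]
  ring

open Finset in
theorem Nat.Partition.finsuppProd_hilbertSchemeWeight (t : K) {n : ℕ} (p : n.Partition) :
    p.parts.toFinsupp.prod (hilbertSchemeWeight t) =
      ((t + 1) / (t - 1)) ^ p.parts.toFinset.card * t ^ (2 * n - 2 * Multiset.card p.parts)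
        * ∏ j ∈ p.parts.toFinset, (t ^ (2 * Multiset.count j p.parts) - 1) := by
  have hexp : ∑ j ∈ p.parts.toFinset, 2 * (j - 1) * p.parts.count j =
      2 * n - 2 * Multiset.card p.parts := by
    rw [← Nat.mul_sub, ← p.sum_map_sub_one, sum_multiset_map_count, mul_sum]
    exact sum_congr rfl fun j _ => by rw [smul_eq_mul]; ring
  rw [Finsupp.prod, Multiset.toFinsupp_support,
    prod_congr rfl fun j hj => by
      rw [Multiset.toFinsupp_apply,
        hilbertSchemeWeight_of_pos t (p.parts_pos (Multiset.mem_toFinset.mp hj))],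
    prod_mul_distrib, prod_mul_distrib, prod_const, prod_pow_eq_pow_sum, hexp]

end Weight

section GeneratingSeries

open scoped PowerSeries.WithPiTopology

variable {K : Type*} [Field K] [TopologicalSpace K] [IsTopologicalRing K] [T2Space K]

theorem hasProd_hilbertScheme_poincare {t : K} (ht : t ≠ 1) :
    HasProd
      (fun n : ℕ =>
        (1 + C (t ^ (2 * n + 1)) * X ^ (n + 1)) ^ 2
          * (1 - C (t ^ (2 * n)) * X ^ (n + 1))⁻¹
          * (1 - C (t ^ (2 * n + 2)) * X ^ (n + 1))⁻¹)
      (mk fun n =>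
        ∑ p : Nat.Partition n,
          ((t + 1) / (t - 1)) ^ p.parts.toFinset.card
            * t ^ (2 * n - 2 * Multiset.card p.parts)
            * ∏ j ∈ p.parts.toFinset, (t ^ (2 * Multiset.count j p.parts) - 1)) := by
  have hα (n : ℕ) : (t + 1) / (t - 1) * (t ^ (2 * n + 2) - t ^ (2 * n)) =
      2 * t ^ (2 * n + 1) + t ^ (2 * n) + t ^ (2 * n + 2) := by
    field_simp [sub_ne_zero.mpr ht]
    ring
  have hfactor (n : ℕ) :
      (1 + C (t ^ (2 * n + 1)) * X ^ (n + 1)) ^ 2 * (1 - C (t ^ (2 * n)) * X ^ (n + 1))⁻¹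
        * (1 - C (t ^ (2 * n + 2)) * X ^ (n + 1))⁻¹ =
      1 + ∑' j, hilbertSchemeWeight t (n + 1) (j + 1) • X ^ ((n + 1) * (j + 1)) := by
    rw [one_add_C_mul_X_pow_sq_mul_inv_mul_inv (by ring) (hα n) n.succ_ne_zero]
    simp only [hilbertSchemeWeight, Nat.add_sub_cancel, mul_add_one]
  have hgenFun := Nat.Partition.hasProd_genFun (hilbertSchemeWeight t)
  simp only [Nat.Partition.genFun, Nat.Partition.finsuppProd_hilbertSchemeWeight] at hgenFun
  simpa only [hfactor] using hgenFun

end GeneratingSeries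

/-- in `F⟦y⟧` with `F = ℚ(t)`,
`∏_{n ≥ 1} (1 + yⁿ t^{2n-1})² / ((1 - yⁿ t^{2n-2})(1 - yⁿ t^{2n}))
  = ∑_{n ≥ 0} (∑_{λ ⊢ n} ((t+1)/(t-1))^{ℓ(λ)} t^{2n-2|λ|} ∏_{j : λ_j ≥ 1} (t^{2λ_j} - 1)) yⁿ`,
where `λ_j` is the number of parts of size `j` (so `j` ranges over the distinct
part sizes, i.e. `λ.parts.toFinset`), `|λ| = λ.parts.card` is the number of parts,
and `ℓ(λ) = λ.parts.toFinset.card` is the number of distinct part sizes.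
(The product index `n : ℕ` encodes the factor for `n + 1 ≥ 1`.) -/
theorem hilbert_scheme_poincare_generating_series :
    letI F := RatFunc ℚ
    letI t : F := RatFunc.X
    HasProd
      (fun n : ℕ =>
        (1 + PowerSeries.C (t ^ (2 * n + 1)) * PowerSeries.X ^ (n + 1)) ^ 2
          * (1 - PowerSeries.C (t ^ (2 * n)) * PowerSeries.X ^ (n + 1))⁻¹
          * (1 - PowerSeries.C (t ^ (2 * n + 2)) * PowerSeries.X ^ (n + 1))⁻¹)
      (PowerSeries.mk fun n =>
        ∑ p : Nat.Partition n,
          ((t + 1) / (t - 1)) ^ p.parts.toFinset.card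
            * t ^ (2 * n - 2 * Multiset.card p.parts)
            * ∏ j ∈ p.parts.toFinset, (t ^ (2 * Multiset.count j p.parts) - 1)) :=
  hasProd_hilbertScheme_poincare RatFunc.X_ne_one
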